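/- Let p ∈ frontier Z be a simple nondegenerate point with associated neighborhood U_p. Suppose there exist a compact set K ⊆ U_p that is a neighborhood of p and ρ > 0 such that α^K is Lebesgue integrable on (0, ρ). Then there exist an open neighborhood U of p, ρ' > 0, and a function a : ℝ → ℝ that is continuous and strictly positive on (0, ρ'] with t ↦ (a t)⁻¹ Lebesgue integrable on (0, ρ'), such that ‖∇f x‖ ≥ a (f x) for every x ∈ U with 0 < f x ≤ ρ'. -/

import Mathlib

open Set MeasureTheory

variable {n : ℕ}

noncomputable def alphaK (f : EuclideanSpace ℝ (Fin n) → ℝ)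
    (K : Set (EuclideanSpace ℝ (Fin n))) (t : ℝ) : ℝ :=
  sSup {y : ℝ | ∃ x ∈ K, f x = t ∧ y = ‖gradient f x‖⁻¹}

/-!
On the compact set `K`, the fibres `K ∩ {f = t}` with `t > 0` avoid the zero set, where `∇f` is
continuous and nonzero; hence `α^K`, the fibrewise maximum of `‖∇f‖⁻¹`, is upper semicontinuous
on `(0, ∞)`. By the Vitali–Carathéodory theorem the integrable function `α^K` lies strictly below
an integrable lower semicontinuous function, and a partition of unity inserts a continuous `h`
between the two. Then `a := h⁻¹` works on the interior of `K`, because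
`‖∇f x‖⁻¹ ≤ α^K (f x) < h (f x)`.
-/

theorem exists_continuous_btwn_of_upperSemicontinuous_lowerSemicontinuous
    {X : Type*} [TopologicalSpace X] [NormalSpace X] [ParacompactSpace X]
    {u : X → ℝ} {g : X → EReal} (hu : UpperSemicontinuous u) (hg : LowerSemicontinuous g)
    (hug : ∀ x, (u x : EReal) < g x) :
    ∃ h : C(X, ℝ), ∀ x, u x < h x ∧ (h x : EReal) < g x := by
  refine exists_continuous_forall_mem_convex_of_local_const
    (t := fun x => {y : ℝ | u x < y ∧ (y : EReal) < g x})
    (fun x => (convex_Ioi (u x)).inter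
      (ordConnected_Iio.preimage_mono EReal.coe_strictMono.monotone).convex)
    fun x => ?_
  obtain ⟨c, huc, hcg⟩ := EReal.lt_iff_exists_real_btwn.1 (hug x)
  exact ⟨c, (hu x c (EReal.coe_lt_coe_iff.1 huc)).and (hg x c hcg)⟩

theorem exists_continuousOn_gt_integrableOn_of_upperSemicontinuousOn
    {X : Type*} [PseudoMetricSpace X] [MeasurableSpace X] [BorelSpace X]
    {μ : Measure X} [μ.WeaklyRegular] [SigmaFinite μ] {s : Set X} (hs : IsOpen s) {u : X → ℝ}
    (hu : UpperSemicontinuousOn u s) (hint : IntegrableOn u s μ) :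
    ∃ h : X → ℝ, ContinuousOn h s ∧ (∀ x ∈ s, u x < h x) ∧ IntegrableOn h s μ := by
  obtain ⟨g, hug, hg, hg_int, hg_top, -⟩ := exists_lt_lowerSemicontinuous_integral_lt
    _ ((integrable_indicator_iff hs.measurableSet).2 hint) one_pos
  obtain ⟨h, hh⟩ := exists_continuous_btwn_of_upperSemicontinuous_lowerSemicontinuous
    (upperSemicontinuousOn_iff_restrict.2 hu) (hg.comp continuous_subtype_val)
    fun x => by simpa [x.2] using hug x
  classical
  let H : X → ℝ := fun x => if hx : x ∈ s then h ⟨x, hx⟩ else 0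
  have hHs : ∀ x : s, H x = h x := fun x => dif_pos x.2
  have hH : ContinuousOn H s :=
    continuousOn_iff_continuous_domRestrict.2 (by convert h.continuous; exact funext hHs)
  refine ⟨H, hH, fun x hx => hHs ⟨x, hx⟩ ▸ (hh ⟨x, hx⟩).1, ?_⟩
  refine Integrable.mono' (hint.norm.add hg_int.integrableOn.norm)
    (hH.aestronglyMeasurable hs.measurableSet) ?_
  filter_upwards [ae_restrict_of_ae hg_top, ae_restrict_mem hs.measurableSet] with x hgx hx
  obtain ⟨hux, hxg⟩ : u x < H x ∧ (H x : EReal) < g x := hHs ⟨x, hx⟩ ▸ hh ⟨x, hx⟩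
  have hHg : H x ≤ (g x).toReal := by
    simpa using EReal.toReal_le_toReal hxg.le (EReal.coe_ne_bot _) hgx.ne
  simp only [Pi.add_apply, Real.norm_eq_abs]
  exact abs_le.2 ⟨by linarith [neg_abs_le (u x), abs_nonneg (g x).toReal],
    by linarith [le_abs_self (g x).toReal, abs_nonneg (u x)]⟩

section FiberwiseSup

variable {X : Type*} [TopologicalSpace X] {K : Set X} {f φ : X → ℝ} {s : Set ℝ}

theorem le_sSup_image_fiber (hK : IsCompact K) (hf : Continuous f)
    (hφ : ContinuousOn φ (K ∩ f ⁻¹' s)) {x : X} (hx : x ∈ K) (hfx : f x ∈ s) :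
    φ x ≤ sSup (φ '' (K ∩ f ⁻¹' {f x})) :=
  le_csSup ((hK.inter_right (isClosed_singleton.preimage hf)).bddAbove_image
    (hφ.mono fun y hy => ⟨hy.1, by rwa [mem_preimage, hy.2]⟩)) ⟨x, ⟨hx, rfl⟩, rfl⟩

theorem upperSemicontinuousOn_sSup_image_fiber [T2Space X] (hK : IsCompact K)
    (hf : Continuous f) (hφ0 : ∀ x, 0 ≤ φ x) (hs : IsOpen s)
    (hφ : ContinuousOn φ (K ∩ f ⁻¹' s)) :
    UpperSemicontinuousOn (fun t => sSup (φ '' (K ∩ f ⁻¹' {t}))) s := by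
  intro t ht c hc
  obtain ⟨δ, hδ, hball⟩ := Metric.nhds_basis_closedBall.mem_iff.1 (hs.mem_nhds ht)
  -- the points of nearby fibres where `φ ≥ c` form a compact set whose image under `f` misses `t`
  set B := K ∩ f ⁻¹' Metric.closedBall t δ ∩ φ ⁻¹' Ici c
  have hB : IsCompact B := by
    have hL := hK.inter_right (Metric.isClosed_closedBall (x := t) (ε := δ) |>.preimage hf)
    exact hL.of_isClosed_subset ((hφ.mono fun x hx => ⟨hx.1, hball hx.2⟩)
      |>.preimage_isClosed_of_isClosed hL.isClosed isClosed_Ici) inter_subset_left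
  have htB : t ∉ f '' B := by
    rintro ⟨x, ⟨⟨hxK, -⟩, hcx⟩, rfl⟩
    exact (le_sSup_image_fiber hK hf hφ hxK ht).not_gt (hc.trans_le hcx)
  filter_upwards [nhdsWithin_le_nhds ((hB.image hf).isClosed.compl_mem_nhds htB),
    nhdsWithin_le_nhds (Metric.closedBall_mem_nhds t hδ)] with t' ht'B ht'δ
  have hfib : IsCompact (K ∩ f ⁻¹' {t'}) := hK.inter_right (isClosed_singleton.preimage hf)
  rcases (K ∩ f ⁻¹' {t'}).eq_empty_or_nonempty with hempty | hne
  · -- an empty fibre has supremum `sSup ∅ = 0`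
    simpa [hempty] using (Real.sSup_nonneg (forall_mem_image.2 fun x _ => hφ0 x)).trans_lt hc
  refine (hfib.sSup_lt_iff_of_continuous hne (hφ.mono fun x hx => ⟨hx.1, ?_⟩) c).2 fun x hx => ?_
  · rw [mem_preimage, hx.2]
    exact hball ht'δ
  · by_contra hcx
    exact ht'B ⟨x, ⟨⟨hx.1, by rwa [mem_preimage, hx.2]⟩, not_lt.1 hcx⟩, hx.2⟩

end FiberwiseSup

theorem ContDiffOn.continuousOn_gradient {F : Type*} [NormedAddCommGroup F]
    [InnerProductSpace ℝ F] [CompleteSpace F] {f : F → ℝ} {s : Set F}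
    (hf : ContDiffOn ℝ 1 f s) (hs : IsOpen s) : ContinuousOn (gradient f) s :=
  (InnerProductSpace.toDual ℝ F).symm.continuous.comp_continuousOn
    (hf.continuousOn_fderiv_of_isOpen hs le_rfl)

theorem alphaK_eq_sSup_image (f : EuclideanSpace ℝ (Fin n) → ℝ)
    (K : Set (EuclideanSpace ℝ (Fin n))) (t : ℝ) :
    alphaK f K t = sSup ((fun x => ‖gradient f x‖⁻¹) '' (K ∩ f ⁻¹' {t})) := by
  rw [alphaK]
  congr 1
  ext y
  simp [eq_comm, and_assoc]

theorem alphaK_nonneg (f : EuclideanSpace ℝ (Fin n) → ℝ) (K : Set (EuclideanSpace ℝ (Fin n)))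
    (t : ℝ) : 0 ≤ alphaK f K t :=
  Real.sSup_nonneg (by rintro _ ⟨x, -, -, rfl⟩; positivity)

theorem alpha_integrable_implies_gradient_inequality_general (n : ℕ)
    (f : EuclideanSpace ℝ (Fin n) → ℝ)
    (hf : Continuous f)
    (hC1 : ContDiffOn ℝ 1 f (f ⁻¹' {0})ᶜ)
    (p : EuclideanSpace ℝ (Fin n))
    (Up : Set (EuclideanSpace ℝ (Fin n)))
    (hsimple : ∀ x ∈ Up, f x ≠ 0 → gradient f x ≠ 0)
    (K : Set (EuclideanSpace ℝ (Fin n))) (hK : IsCompact K) (hKsub : K ⊆ Up)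
    (hKnhds : K ∈ nhds p)
    (ρ : ℝ) (hρ : 0 < ρ) (hint : IntegrableOn (alphaK f K) (Ioo 0 ρ)) :
    ∃ U : Set (EuclideanSpace ℝ (Fin n)), IsOpen U ∧ p ∈ U ∧
      ∃ ρ' > (0:ℝ), ∃ a : ℝ → ℝ, ContinuousOn a (Ioc 0 ρ') ∧
        (∀ t ∈ Ioc (0:ℝ) ρ', 0 < a t) ∧
        IntegrableOn (fun t => (a t)⁻¹) (Ioo 0 ρ') ∧
        ∀ x ∈ U, 0 < f x → f x ≤ ρ' → a (f x) ≤ ‖gradient f x‖ := by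
  have hgrad : ContinuousOn (fun x => ‖gradient f x‖⁻¹) (K ∩ f ⁻¹' Ioi 0) :=
    ((hC1.continuousOn_gradient (isOpen_compl_singleton.preimage hf)).mono
      fun x hx => ne_of_gt hx.2).norm.inv₀
      fun x hx => norm_ne_zero_iff.2 (hsimple x (hKsub hx.1) (ne_of_gt hx.2))
  have husc : UpperSemicontinuousOn (alphaK f K) (Ioo 0 ρ) := by
    rw [funext (alphaK_eq_sSup_image f K)]
    exact (upperSemicontinuousOn_sSup_image_fiber hK hf (fun x => by positivity) isOpen_Ioi
      hgrad).mono Ioo_subset_Ioi_self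
  obtain ⟨h, hcont, hαh, hhint⟩ :=
    exists_continuousOn_gt_integrableOn_of_upperSemicontinuousOn isOpen_Ioo husc hint
  have hsub : Ioc 0 (ρ / 2) ⊆ Ioo 0 ρ := Ioc_subset_Ioo_right (half_lt_self hρ)
  have hpos : ∀ t ∈ Ioc 0 (ρ / 2), 0 < h t := fun t ht =>
    (alphaK_nonneg f K t).trans_lt (hαh t (hsub ht))
  refine ⟨interior K, isOpen_interior, mem_interior_iff_mem_nhds.2 hKnhds, ρ / 2, half_pos hρ,
    fun t => (h t)⁻¹, (hcont.mono hsub).inv₀ fun t ht => (hpos t ht).ne',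
    fun t ht => inv_pos.2 (hpos t ht),
    by simpa using hhint.mono_set (Ioo_subset_Ioo_right (half_lt_self hρ).le), ?_⟩
  intro x hxU hfx hfxρ
  have hxK := interior_subset hxU
  rw [inv_le_comm₀ (hpos _ ⟨hfx, hfxρ⟩) (norm_pos_iff.2 (hsimple x (hKsub hxK) hfx.ne'))]
  calc ‖gradient f x‖⁻¹ ≤ alphaK f K (f x) :=
        alphaK_eq_sSup_image f K _ ▸ le_sSup_image_fiber hK hf hgrad hxK hfx
    _ ≤ h (f x) := (hαh _ (hsub ⟨hfx, hfxρ⟩)).le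

theorem alpha_integrable_implies_gradient_inequality (n : ℕ) (hn : 1 ≤ n)
    (f : EuclideanSpace ℝ (Fin n) → ℝ)
    (hf : Continuous f) (hf0 : ∀ x, 0 ≤ f x)
    (hZ : (f ⁻¹' {0}).Nonempty)
    (hC1 : ContDiffOn ℝ 1 f (f ⁻¹' {0})ᶜ)
    (p : EuclideanSpace ℝ (Fin n)) (hp : p ∈ frontier (f ⁻¹' {0}))
    (Up : Set (EuclideanSpace ℝ (Fin n))) (hUp : IsOpen Up) (hpUp : p ∈ Up)
    (hsimple : ∀ x ∈ Up, f x ≠ 0 → gradient f x ≠ 0)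
    (K : Set (EuclideanSpace ℝ (Fin n))) (hK : IsCompact K) (hKsub : K ⊆ Up)
    (hKnhds : K ∈ nhds p)
    (ρ : ℝ) (hρ : 0 < ρ) (hint : IntegrableOn (alphaK f K) (Ioo 0 ρ)) :
    ∃ U : Set (EuclideanSpace ℝ (Fin n)), IsOpen U ∧ p ∈ U ∧
      ∃ ρ' > (0:ℝ), ∃ a : ℝ → ℝ, ContinuousOn a (Ioc 0 ρ') ∧
        (∀ t ∈ Ioc (0:ℝ) ρ', 0 < a t) ∧
        IntegrableOn (fun t => (a t)⁻¹) (Ioo 0 ρ') ∧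
        ∀ x ∈ U, 0 < f x → f x ≤ ρ' → a (f x) ≤ ‖gradient f x‖ :=
  alpha_integrable_implies_gradient_inequality_general n f hf hC1 p Up hsimple K hK hKsub hKnhds ρ
    hρ hint
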